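/- (Conjugate of a discrete-time standard system with invertible state matrix) Let A ∈ ℝ^{n×n} be invertible, B ∈ ℝ^{n×m}, C ∈ ℝ^{p×n}, D ∈ ℝ^{p×m}, and let G = C·(λ•I_n − A)⁻¹·B + D over K = ℝ(λ). Then the matrix λ⁻¹•I_n − A is invertible over K, the matrix λ•I_n − A^{-T} is invertible over K (where A^{-T} denotes (A⁻¹)ᵀ), and Bᵀ·A^{-T}·(λ•I_n − A^{-T})⁻¹·(−A^{-T}·Cᵀ) + (Dᵀ − Bᵀ·A^{-T}·Cᵀ) = (C·(λ⁻¹•I_n − A)⁻¹·B + D)ᵀ over K; that is, the standard state-space quadruple (A^{-T}, −A^{-T}Cᵀ, BᵀA^{-T}, Dᵀ − BᵀA^{-T}Cᵀ) realizes the conjugate transfer function matrix G^∼(λ) = G(λ⁻¹)ᵀ. -/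
import Mathlib


open Matrix

noncomputable section
set_option synthInstance.maxHeartbeats 1000000
set_option maxHeartbeats 1000000

/-- `K = ℝ(λ)`, the field of real rational functions. -/
abbrev K : Type := RatFunc ℝ

/-- The rational function `λ` (the variable of `K`). -/
def Lam : K := RatFunc.X

/-- Entrywise embedding of a real matrix into matrices over `K = ℝ(λ)`. -/
def toK {ι κ : Type} (M : Matrix ι κ ℝ) : Matrix ι κ K := M.map (algebraMap ℝ K)

lemma toK_mul {ι κ τ : Type} [Fintype κ] (M : Matrix ι κ ℝ) (N : Matrix κ τ ℝ) :
    toK (M * N) = toK M * toK N := Matrix.map_mul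

lemma toK_one {n : ℕ} : toK (1 : Matrix (Fin n) (Fin n) ℝ) = 1 :=
  Matrix.map_one _ (map_zero _) (map_one _)

lemma toK_transpose {ι κ : Type} (M : Matrix ι κ ℝ) : toK Mᵀ = (toK M)ᵀ :=
  Matrix.transpose_map

lemma toK_neg {ι κ : Type} (M : Matrix ι κ ℝ) : toK (-M) = -toK M := by
  ext i j; simp [toK]

lemma toK_sub {ι κ : Type} (M N : Matrix ι κ ℝ) : toK (M - N) = toK M - toK N := by
  ext i j; simp [toK]

lemma det_char_ne_zero {n : ℕ} (M : Matrix (Fin n) (Fin n) ℝ) :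
    (Lam • (1 : Matrix (Fin n) (Fin n) K) - toK M).det ≠ 0 := by
  have h1 : Lam • (1 : Matrix (Fin n) (Fin n) K) - toK M
      = (charmatrix M).map (algebraMap (Polynomial ℝ) K) := by
    ext i j
    by_cases h : i = j
    · subst h
      simp [toK, charmatrix_apply_eq, Matrix.smul_apply, Lam, RatFunc.algebraMap_C,
        RatFunc.algebraMap_X]
    · simp [toK, charmatrix_apply_ne _ _ _ h, Matrix.smul_apply, Matrix.one_apply_ne h,
        RatFunc.algebraMap_C]
  rw [h1, ← RingHom.mapMatrix_apply, ← RingHom.map_det]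
  have h2 : (charmatrix M).det = M.charpoly := rfl
  rw [h2]
  exact RatFunc.algebraMap_ne_zero M.charpoly_monic.ne_zero

lemma toK_mul_inv {n : ℕ} (A : Matrix (Fin n) (Fin n) ℝ) (hA : IsUnit A.det) :
    toK A * toK A⁻¹ = 1 := by
  rw [← toK_mul, Matrix.mul_nonsing_inv A hA, toK_one]

lemma fact_lemma {n : ℕ} (A : Matrix (Fin n) (Fin n) ℝ) (hA : IsUnit A.det) :
    Lam⁻¹ • (1 : Matrix (Fin n) (Fin n) K) - toK A
      = (-Lam⁻¹) • (toK A * (Lam • (1 : Matrix (Fin n) (Fin n) K) - toK A⁻¹)) := by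
  have hX : Lam ≠ 0 := RatFunc.X_ne_zero
  rw [mul_sub, Matrix.mul_smul, mul_one, toK_mul_inv A hA, smul_sub, smul_smul, neg_mul,
    inv_mul_cancel₀ hX, neg_smul, neg_smul, one_smul, sub_neg_eq_add, sub_eq_neg_add]

lemma det_toK_ne_zero {n : ℕ} (A : Matrix (Fin n) (Fin n) ℝ) (hA : IsUnit A.det) :
    (toK A).det ≠ 0 := by
  have h : (toK A).det = algebraMap ℝ K A.det := by
    rw [toK, ← RingHom.mapMatrix_apply, ← RingHom.map_det]
  rw [h]
  simpa using hA.ne_zero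

lemma det1_lemma {n : ℕ} (A : Matrix (Fin n) (Fin n) ℝ) (hA : IsUnit A.det) :
    (Lam⁻¹ • (1 : Matrix (Fin n) (Fin n) K) - toK A).det ≠ 0 := by
  have hX : Lam ≠ 0 := RatFunc.X_ne_zero
  rw [fact_lemma A hA, Matrix.det_smul, Matrix.det_mul]
  exact mul_ne_zero (pow_ne_zero _ (neg_ne_zero.2 (inv_ne_zero hX)))
    (mul_ne_zero (det_toK_ne_zero A hA) (det_char_ne_zero A⁻¹))

lemma inv_lemma {n : ℕ} (A : Matrix (Fin n) (Fin n) ℝ) (hA : IsUnit A.det) :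
    (Lam⁻¹ • (1 : Matrix (Fin n) (Fin n) K) - toK A)⁻¹
      = (-Lam) • ((Lam • (1 : Matrix (Fin n) (Fin n) K) - toK A⁻¹)⁻¹ * toK A⁻¹) := by
  have hX : Lam ≠ 0 := RatFunc.X_ne_zero
  have hVV : (Lam • (1 : Matrix (Fin n) (Fin n) K) - toK A⁻¹) *
      (Lam • (1 : Matrix (Fin n) (Fin n) K) - toK A⁻¹)⁻¹ = 1 :=
    Matrix.mul_nonsing_inv _ (isUnit_iff_ne_zero.2 (det_char_ne_zero A⁻¹))
  apply Matrix.inv_eq_right_inv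
  rw [fact_lemma A hA, Matrix.smul_mul, Matrix.mul_smul, smul_smul, neg_mul_neg,
    inv_mul_cancel₀ hX, one_smul, mul_assoc, ← mul_assoc (Lam • 1 - toK A⁻¹), hVV, one_mul,
    toK_mul_inv A hA]

/-- key commuting/resolvent identity over `K`. -/
lemma key_lemma {n : ℕ} (M : Matrix (Fin n) (Fin n) ℝ) :
    (-Lam) • (toK M * (Lam • (1 : Matrix (Fin n) (Fin n) K) - toK M)⁻¹)
      = -(toK M * (Lam • (1 : Matrix (Fin n) (Fin n) K) - toK M)⁻¹ * toK M) - toK M := by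
  set E : Matrix (Fin n) (Fin n) K := toK M with hE
  set W : Matrix (Fin n) (Fin n) K := Lam • (1 : Matrix (Fin n) (Fin n) K) - E with hW
  have h2 : W.det ≠ 0 := det_char_ne_zero M
  have hWW : W * W⁻¹ = 1 := Matrix.mul_nonsing_inv _ (isUnit_iff_ne_zero.2 h2)
  have hW'W : W⁻¹ * W = 1 := Matrix.nonsing_inv_mul _ (isUnit_iff_ne_zero.2 h2)
  have hWE : W * E = E * W := by
    rw [hW, sub_mul, mul_sub, Matrix.smul_mul, Matrix.mul_smul, one_mul, mul_one]
  have hcomm : W⁻¹ * E = E * W⁻¹ := by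
    calc W⁻¹ * E = W⁻¹ * E * (W * W⁻¹) := by rw [hWW, mul_one]
      _ = W⁻¹ * (E * W) * W⁻¹ := by simp only [mul_assoc]
      _ = W⁻¹ * (W * E) * W⁻¹ := by rw [hWE]
      _ = (W⁻¹ * W) * (E * W⁻¹) := by simp only [mul_assoc]
      _ = E * W⁻¹ := by rw [hW'W, one_mul]
  have hsum : Lam • (1 : Matrix (Fin n) (Fin n) K) = W + E := by
    rw [hW]; abel
  have e0 : (-Lam) • (E * W⁻¹) = -((Lam • (1 : Matrix (Fin n) (Fin n) K)) * (E * W⁻¹)) := by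
    rw [Matrix.smul_mul, one_mul, neg_smul]
  have e1 : (Lam • (1 : Matrix (Fin n) (Fin n) K)) * (E * W⁻¹) = E + E * W⁻¹ * E := by
    rw [hsum, add_mul, ← mul_assoc, hWE, mul_assoc, hWW, mul_one]
    congr 1
    rw [← hcomm, ← mul_assoc, ← hcomm]
  rw [e0, e1]; abel

lemma alg_lemma {n p m : ℕ} (B' : Matrix (Fin m) (Fin n) K) (C' : Matrix (Fin n) (Fin p) K)
    (D' : Matrix (Fin m) (Fin p) K) (E W : Matrix (Fin n) (Fin n) K)
    (hkey : (-Lam) • (E * W⁻¹) = -(E * W⁻¹ * E) - E) :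
    B' * E * W⁻¹ * (-(E * C')) + (D' - B' * E * C')
      = B' * (((-Lam) • (E * W⁻¹)) * C') + D' := by
  rw [hkey]
  simp only [sub_eq_add_neg, Matrix.mul_add, Matrix.add_mul, Matrix.mul_neg,
    Matrix.neg_mul, Matrix.mul_assoc, neg_neg]
  abel

/-- for a standard discrete-time system with invertible `A`, the quadruple
`(A⁻ᵀ, −A⁻ᵀCᵀ, BᵀA⁻ᵀ, Dᵀ − BᵀA⁻ᵀCᵀ)` realizes the conjugate `G^∼(λ) = G(λ⁻¹)ᵀ`
of `G = C (λI − A)⁻¹ B + D`. -/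
theorem conjugate_realization_discrete {n p m : ℕ}
    (A : Matrix (Fin n) (Fin n) ℝ) (B : Matrix (Fin n) (Fin m) ℝ)
    (C : Matrix (Fin p) (Fin n) ℝ) (D : Matrix (Fin p) (Fin m) ℝ)
    (G : Matrix (Fin p) (Fin m) K)
    (hA : IsUnit A.det)
    (hG : G = toK C * (Lam • (1 : Matrix (Fin n) (Fin n) K) - toK A)⁻¹ * toK B + toK D) :
    (Lam⁻¹ • (1 : Matrix (Fin n) (Fin n) K) - toK A).det ≠ 0 ∧
    (Lam • (1 : Matrix (Fin n) (Fin n) K) - toK (A⁻¹)ᵀ).det ≠ 0 ∧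
    toK (Bᵀ * (A⁻¹)ᵀ) * (Lam • (1 : Matrix (Fin n) (Fin n) K) - toK (A⁻¹)ᵀ)⁻¹ *
        toK (-((A⁻¹)ᵀ * Cᵀ)) + toK (Dᵀ - Bᵀ * (A⁻¹)ᵀ * Cᵀ)
      = (toK C * (Lam⁻¹ • (1 : Matrix (Fin n) (Fin n) K) - toK A)⁻¹ * toK B + toK D)ᵀ := by
  refine ⟨det1_lemma A hA, det_char_ne_zero (A⁻¹)ᵀ, ?_⟩
  rw [inv_lemma A hA]
  simp only [Matrix.transpose_add, Matrix.transpose_mul, Matrix.transpose_smul,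
    Matrix.transpose_nonsing_inv, Matrix.transpose_sub, Matrix.transpose_one,
    ← toK_transpose]
  simp only [toK_mul, toK_neg, toK_sub]
  have hk := key_lemma (A⁻¹)ᵀ
  simp only [Matrix.transpose_nonsing_inv] at hk
  exact alg_lemma _ _ _ _ _ hk
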